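/- There exist constants Q₀ > 0 and C > 0 with the following property (key estimate for Theorem 2): for every pair of continuously differentiable functions u, v : ℝ → ℂ with u, v, u', v' square-integrable and ∫_ℝ (|u|² + |v|²) dx ≤ Q₀, one has ∫_ℝ (|u'|² + |v'|²) dx ≤ 2 R(u,v) + C, where R(u,v) = ∫_ℝ [ |u'|² + |v'|² − (i/2)(u' ū − ū' u)(|u|² + 2|v|²) + (i/2)(v' v̄ − v̄' v)(2|u|² + |v|²) − (u v̄ + ū v)(|u|² + |v|²) + 2|u|²|v|²(|u|² + |v|²) ] dx. In particular, the conserved functional R controls the H¹ norm of L²-small functions. -/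

import Mathlib

/-!
An `H¹` function on the line satisfies `‖u x‖² ≤ ∫ ‖u‖ ‖u'‖`: the derivative of `‖u‖²` is
`2 ⟪u, u'⟫`, and `‖u‖²` vanishes at both ends, so integrating from `-∞` and from `+∞` to `x`
gives twice the bound. Hence with `J = ∫ (‖u‖ ‖u'‖ + ‖v‖ ‖v'‖)`, `M = ∫ (‖u‖² + ‖v‖²)` and
`D = ∫ (‖u'‖² + ‖v'‖²)` one has `‖u‖² + ‖v‖² ≤ J` pointwise and `J² ≤ M D` by Cauchy–Schwarz.
The quartic terms of the density of `R` are then bounded by `2 J (‖u‖ ‖u'‖ + ‖v‖ ‖v'‖)` and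
`J (‖u‖² + ‖v‖²)`, and the sextic term is nonnegative, so `R ≥ D - 2 J² - J M`. Since
`2 J M ≤ J² + M²`, this gives `2 R ≥ D - 5 M D - M²`, and `M ≤ 1/5` finishes.
-/

open Complex MeasureTheory

/-- The complex-written integrand of the higher-order conserved functional `R`. -/
noncomputable def mtmRIntegrand (u v : ℝ → ℂ) (x : ℝ) : ℂ :=
  ((‖deriv u x‖ : ℝ) : ℂ) ^ 2 + ((‖deriv v x‖ : ℝ) : ℂ) ^ 2
    - (Complex.I / 2) * (deriv u x * (starRingEnd ℂ) (u x)
        - (starRingEnd ℂ) (deriv u x) * u x) *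
      (((‖u x‖ : ℝ) : ℂ) ^ 2 + 2 * ((‖v x‖ : ℝ) : ℂ) ^ 2)
    + (Complex.I / 2) * (deriv v x * (starRingEnd ℂ) (v x)
        - (starRingEnd ℂ) (deriv v x) * v x) *
      (2 * ((‖u x‖ : ℝ) : ℂ) ^ 2 + ((‖v x‖ : ℝ) : ℂ) ^ 2)
    - (u x * (starRingEnd ℂ) (v x) + (starRingEnd ℂ) (u x) * v x) *
      (((‖u x‖ : ℝ) : ℂ) ^ 2 + ((‖v x‖ : ℝ) : ℂ) ^ 2)
    + 2 * ((‖u x‖ : ℝ) : ℂ) ^ 2 * ((‖v x‖ : ℝ) : ℂ) ^ 2 *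
      (((‖u x‖ : ℝ) : ℂ) ^ 2 + ((‖v x‖ : ℝ) : ℂ) ^ 2)

/-- The higher-order conserved functional `R` of the massive Thirring model
(its integrand is real-valued, so we take the real part of the complex integral). -/
noncomputable def mtmR (u v : ℝ → ℂ) : ℝ :=
  (∫ x : ℝ, mtmRIntegrand u v x).re

open Filter Set Topology ComplexConjugate

theorem norm_le_half_integral_norm_of_hasDerivAt {E : Type*} [NormedAddCommGroup E]
    [NormedSpace ℝ E] [CompleteSpace E] {f f' : ℝ → E} (hderiv : ∀ x, HasDerivAt f (f' x) x)
    (hf : Integrable f) (hf' : Integrable f') (x : ℝ) :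
    ‖f x‖ ≤ (∫ t, ‖f' t‖) / 2 := by
  have hbot : Tendsto f atBot (𝓝 0) :=
    tendsto_zero_of_hasDerivAt_of_integrableOn_Iic (a := x) (fun t _ ↦ hderiv t)
      hf'.integrableOn hf.integrableOn
  have htop : Tendsto f atTop (𝓝 0) :=
    tendsto_zero_of_hasDerivAt_of_integrableOn_Ioi (a := x) (fun t _ ↦ hderiv t)
      hf'.integrableOn hf.integrableOn
  have hleft : ∫ t in Iic x, f' t = f x - 0 :=
    integral_Iic_of_hasDerivAt_of_tendsto' (fun t _ ↦ hderiv t) hf'.integrableOn hbot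
  have hright : ∫ t in Ioi x, f' t = 0 - f x :=
    integral_Ioi_of_hasDerivAt_of_tendsto' (fun t _ ↦ hderiv t) hf'.integrableOn htop
  have hsplit := intervalIntegral.integral_Iic_add_Ioi (b := x) hf'.norm.integrableOn
    hf'.norm.integrableOn
  calc ‖f x‖ = (‖∫ t in Iic x, f' t‖ + ‖∫ t in Ioi x, f' t‖) / 2 := by
        rw [hleft, hright, sub_zero, zero_sub, norm_neg]; ring
    _ ≤ ((∫ t in Iic x, ‖f' t‖) + ∫ t in Ioi x, ‖f' t‖) / 2 := by
        gcongr <;> exact norm_integral_le_integral_norm _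
    _ = (∫ t, ‖f' t‖) / 2 := by rw [hsplit]

theorem sq_integral_mul_le_integral_sq_mul_integral_sq {α : Type*} [MeasurableSpace α]
    {μ : Measure α} {f g : α → ℝ} (hf : 0 ≤ᵐ[μ] f) (hg : 0 ≤ᵐ[μ] g) (hf2 : MemLp f 2 μ)
    (hg2 : MemLp g 2 μ) :
    (∫ x, f x * g x ∂μ) ^ 2 ≤ (∫ x, f x ^ 2 ∂μ) * ∫ x, g x ^ 2 ∂μ := by
  have h := integral_mul_le_Lp_mul_Lq_of_nonneg Real.HolderConjugate.two_two hf hg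
    (by simpa using hf2) (by simpa using hg2)
  have hA : 0 ≤ ∫ x, f x ^ 2 ∂μ := integral_nonneg fun x ↦ sq_nonneg _
  have hB : 0 ≤ ∫ x, g x ^ 2 ∂μ := integral_nonneg fun x ↦ sq_nonneg _
  have h0 : 0 ≤ ∫ x, f x * g x ∂μ :=
    integral_nonneg_of_ae (by filter_upwards [hf, hg] with x hfx hgx using mul_nonneg hfx hgx)
  simp only [Real.rpow_two, ← Real.sqrt_eq_rpow] at h
  calc (∫ x, f x * g x ∂μ) ^ 2 ≤ (√(∫ x, f x ^ 2 ∂μ) * √(∫ x, g x ^ 2 ∂μ)) ^ 2 := by gcongr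
    _ = _ := by rw [mul_pow, Real.sq_sqrt hA, Real.sq_sqrt hB]

theorem MeasureTheory.MemLp.integrable_norm_mul_norm {α E F : Type*} [MeasurableSpace α]
    {μ : Measure α} [NormedAddCommGroup E] [NormedAddCommGroup F] {f : α → E} {g : α → F}
    (hf : MemLp f 2 μ) (hg : MemLp g 2 μ) : Integrable (fun x ↦ ‖f x‖ * ‖g x‖) μ :=
  hf.norm.integrable_mul hg.norm

theorem sq_add_le_mul_add {x y a b c d : ℝ} (ha : 0 ≤ a) (hb : 0 ≤ b)
    (hc : 0 ≤ c) (hd : 0 ≤ d) (hxac : x ^ 2 ≤ a * c) (hybd : y ^ 2 ≤ b * d) :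
    (x + y) ^ 2 ≤ (a + b) * (c + d) := by
  have hxy : (x * y) ^ 2 ≤ (a * d) * (b * c) := by
    calc (x * y) ^ 2 = x ^ 2 * y ^ 2 := by ring
      _ ≤ (a * c) * (b * d) := mul_le_mul hxac hybd (sq_nonneg _) (by positivity)
      _ = (a * d) * (b * c) := by ring
  have : 2 * (x * y) ≤ a * d + b * c := by
    nlinarith [sq_nonneg (a * d - b * c), mul_nonneg ha hd, mul_nonneg hb hc]
  nlinarith

theorem sq_norm_le_integral_norm_mul_norm_deriv {E : Type*} [NormedAddCommGroup E]
    [InnerProductSpace ℝ E] {u : ℝ → E} (hu : ContDiff ℝ 1 u)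
    (hu2 : Integrable fun x ↦ ‖u x‖ ^ 2)
    (huu' : Integrable fun x ↦ ‖u x‖ * ‖deriv u x‖) (x : ℝ) :
    ‖u x‖ ^ 2 ≤ ∫ t, ‖u t‖ * ‖deriv u t‖ := by
  have hderiv : ∀ t, HasDerivAt (fun t ↦ ‖u t‖ ^ 2) (2 * inner ℝ (u t) (deriv u t)) t :=
    fun t ↦ (hu.differentiable one_ne_zero t).hasDerivAt.norm_sq
  have hbound : ∀ t, ‖2 * inner ℝ (u t) (deriv u t)‖ ≤ 2 * (‖u t‖ * ‖deriv u t‖) := fun t ↦ by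
    rw [norm_mul, Real.norm_two]
    exact mul_le_mul_of_nonneg_left (norm_inner_le_norm _ _) zero_le_two
  have hcont : Continuous fun t ↦ 2 * inner ℝ (u t) (deriv u t) :=
    continuous_const.mul (hu.continuous.inner (hu.continuous_deriv le_rfl))
  have hint : Integrable fun t ↦ 2 * inner ℝ (u t) (deriv u t) :=
    (huu'.const_mul 2).mono' hcont.aestronglyMeasurable (ae_of_all _ hbound)
  calc ‖u x‖ ^ 2 = ‖‖u x‖ ^ 2‖ := by simp
    _ ≤ (∫ t, ‖2 * inner ℝ (u t) (deriv u t)‖) / 2 :=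
        norm_le_half_integral_norm_of_hasDerivAt hderiv hu2 hint x
    _ ≤ (∫ t, 2 * (‖u t‖ * ‖deriv u t‖)) / 2 := by
        gcongr 1
        exact integral_mono hint.norm (huu'.const_mul 2) hbound
    _ = ∫ t, ‖u t‖ * ‖deriv u t‖ := by rw [integral_const_mul]; ring

theorem abs_im_mul_conj_le (z w : ℂ) : |(z * conj w).im| ≤ ‖z‖ * ‖w‖ :=
  (abs_im_le_norm _).trans_eq (by rw [norm_mul, norm_conj])

theorem abs_re_mul_conj_le (z w : ℂ) : |(z * conj w).re| ≤ ‖z‖ * ‖w‖ :=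
  (abs_re_le_norm _).trans_eq (by rw [norm_mul, norm_conj])

noncomputable def mtmDensity (a b a' b' : ℂ) : ℝ :=
  ‖a'‖ ^ 2 + ‖b'‖ ^ 2
    + (a' * conj a).im * (‖a‖ ^ 2 + 2 * ‖b‖ ^ 2)
    - (b' * conj b).im * (2 * ‖a‖ ^ 2 + ‖b‖ ^ 2)
    - 2 * (a * conj b).re * (‖a‖ ^ 2 + ‖b‖ ^ 2)
    + 2 * ‖a‖ ^ 2 * ‖b‖ ^ 2 * (‖a‖ ^ 2 + ‖b‖ ^ 2)

theorem mtmRIntegrand_eq (u v : ℝ → ℂ) (x : ℝ) :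
    mtmRIntegrand u v x = mtmDensity (u x) (v x) (deriv u x) (deriv v x) := by
  apply Complex.ext <;>
  simp only [mtmRIntegrand, mtmDensity, add_re, sub_re, mul_re, mul_im, I_re, I_im, div_re,
    div_im, conj_re, conj_im, ofReal_re, ofReal_im, normSq_ofNat, re_ofNat, im_ofNat, sub_im,
    add_im, ← ofReal_pow] <;>
  ring

theorem mtmR_eq_integral_mtmDensity (u v : ℝ → ℂ) :
    mtmR u v = ∫ x, mtmDensity (u x) (v x) (deriv u x) (deriv v x) := by
  simp_rw [mtmR, mtmRIntegrand_eq]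
  rw [integral_complex_ofReal, ofReal_re]

theorem Continuous.mtmDensity {X : Type*} [TopologicalSpace X] {a b a' b' : X → ℂ}
    (ha : Continuous a) (hb : Continuous b) (ha' : Continuous a') (hb' : Continuous b') :
    Continuous fun x ↦ mtmDensity (a x) (b x) (a' x) (b' x) := by
  unfold _root_.mtmDensity; fun_prop

section

variable {a b a' b' : ℂ} {S : ℝ}

theorem abs_mtmDensity_sub_le (hS : ‖a‖ ^ 2 + ‖b‖ ^ 2 ≤ S) :
    |mtmDensity a b a' b' - (‖a'‖ ^ 2 + ‖b'‖ ^ 2) - 2 * ‖a‖ ^ 2 * ‖b‖ ^ 2 * (‖a‖ ^ 2 + ‖b‖ ^ 2)|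
      ≤ 2 * S * (‖a‖ * ‖a'‖ + ‖b‖ * ‖b'‖) + S * (‖a‖ ^ 2 + ‖b‖ ^ 2) := by
  have hab : 2 * ‖a‖ * ‖b‖ ≤ ‖a‖ ^ 2 + ‖b‖ ^ 2 := two_mul_le_add_sq _ _
  have hu : |(a' * conj a).im * (‖a‖ ^ 2 + 2 * ‖b‖ ^ 2)| ≤ ‖a'‖ * ‖a‖ * (2 * S) := by
    rw [abs_mul, abs_of_nonneg (by positivity : (0 : ℝ) ≤ ‖a‖ ^ 2 + 2 * ‖b‖ ^ 2)]
    exact mul_le_mul (abs_im_mul_conj_le a' a) (by nlinarith) (by positivity) (by positivity)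
  have hv : |(b' * conj b).im * (2 * ‖a‖ ^ 2 + ‖b‖ ^ 2)| ≤ ‖b'‖ * ‖b‖ * (2 * S) := by
    rw [abs_mul, abs_of_nonneg (by positivity : (0 : ℝ) ≤ 2 * ‖a‖ ^ 2 + ‖b‖ ^ 2)]
    exact mul_le_mul (abs_im_mul_conj_le b' b) (by nlinarith) (by positivity) (by positivity)
  have huv : |2 * (a * conj b).re * (‖a‖ ^ 2 + ‖b‖ ^ 2)| ≤ S * (‖a‖ ^ 2 + ‖b‖ ^ 2) := by
    rw [abs_mul, abs_mul, abs_two, abs_of_nonneg (by positivity : (0 : ℝ) ≤ ‖a‖ ^ 2 + ‖b‖ ^ 2)]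
    have := abs_re_mul_conj_le a b
    exact mul_le_mul_of_nonneg_right (by linarith) (by positivity)
  unfold mtmDensity
  rw [abs_le] at hu hv huv ⊢
  constructor <;> nlinarith

theorem mtmDensity_lower_bound (hS : ‖a‖ ^ 2 + ‖b‖ ^ 2 ≤ S) :
    ‖a'‖ ^ 2 + ‖b'‖ ^ 2 - 2 * S * (‖a‖ * ‖a'‖ + ‖b‖ * ‖b'‖) - S * (‖a‖ ^ 2 + ‖b‖ ^ 2)
      ≤ mtmDensity a b a' b' := by
  have := (abs_le.1 (abs_mtmDensity_sub_le (a' := a') (b' := b') hS)).1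
  have : 0 ≤ 2 * ‖a‖ ^ 2 * ‖b‖ ^ 2 * (‖a‖ ^ 2 + ‖b‖ ^ 2) := by positivity
  linarith

theorem abs_mtmDensity_le (hS : ‖a‖ ^ 2 + ‖b‖ ^ 2 ≤ S) :
    |mtmDensity a b a' b'| ≤ ‖a'‖ ^ 2 + ‖b'‖ ^ 2 + 2 * S * (‖a‖ * ‖a'‖ + ‖b‖ * ‖b'‖)
      + (S + S ^ 2) * (‖a‖ ^ 2 + ‖b‖ ^ 2) := by
  have := abs_le.1 (abs_mtmDensity_sub_le (a' := a') (b' := b') hS)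
  have hab : 2 * (‖a‖ ^ 2 * ‖b‖ ^ 2) ≤ S ^ 2 := by
    nlinarith [two_mul_le_add_sq (‖a‖ ^ 2) (‖b‖ ^ 2)]
  have : 0 ≤ 2 * ‖a‖ ^ 2 * ‖b‖ ^ 2 * (‖a‖ ^ 2 + ‖b‖ ^ 2) := by positivity
  have : 2 * ‖a‖ ^ 2 * ‖b‖ ^ 2 * (‖a‖ ^ 2 + ‖b‖ ^ 2) ≤ S ^ 2 * (‖a‖ ^ 2 + ‖b‖ ^ 2) :=
    by nlinarith
  rw [abs_le]; constructor <;> nlinarith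

end

section

variable {u v : ℝ → ℂ}

theorem integral_sq_norm_deriv_sub_le_mtmR (hu : ContDiff ℝ 1 u) (hv : ContDiff ℝ 1 v)
    (hu2 : MemLp u 2) (hv2 : MemLp v 2) (hu'2 : MemLp (deriv u) 2) (hv'2 : MemLp (deriv v) 2)
    {S : ℝ} (hS : ∀ x, ‖u x‖ ^ 2 + ‖v x‖ ^ 2 ≤ S) :
    (∫ x, (‖deriv u x‖ ^ 2 + ‖deriv v x‖ ^ 2))
      - 2 * S * (∫ x, (‖u x‖ * ‖deriv u x‖ + ‖v x‖ * ‖deriv v x‖))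
      - S * (∫ x, (‖u x‖ ^ 2 + ‖v x‖ ^ 2)) ≤ mtmR u v := by
  have hmass : Integrable fun x ↦ ‖u x‖ ^ 2 + ‖v x‖ ^ 2 :=
    (hu2.integrable_norm_pow two_ne_zero).add (hv2.integrable_norm_pow two_ne_zero)
  have hkin : Integrable fun x ↦ ‖deriv u x‖ ^ 2 + ‖deriv v x‖ ^ 2 :=
    (hu'2.integrable_norm_pow two_ne_zero).add (hv'2.integrable_norm_pow two_ne_zero)
  have hcross : Integrable fun x ↦ ‖u x‖ * ‖deriv u x‖ + ‖v x‖ * ‖deriv v x‖ :=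
    (hu2.integrable_norm_mul_norm hu'2).add (hv2.integrable_norm_mul_norm hv'2)
  have hkin_cross : Integrable fun x ↦ (‖deriv u x‖ ^ 2 + ‖deriv v x‖ ^ 2)
      - 2 * S * (‖u x‖ * ‖deriv u x‖ + ‖v x‖ * ‖deriv v x‖) :=
    hkin.sub (hcross.const_mul _)
  have hlower : Integrable fun x ↦ (‖deriv u x‖ ^ 2 + ‖deriv v x‖ ^ 2)
      - 2 * S * (‖u x‖ * ‖deriv u x‖ + ‖v x‖ * ‖deriv v x‖) - S * (‖u x‖ ^ 2 + ‖v x‖ ^ 2) :=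
    hkin_cross.sub (hmass.const_mul _)
  have hupper : Integrable fun x ↦ (‖deriv u x‖ ^ 2 + ‖deriv v x‖ ^ 2)
      + 2 * S * (‖u x‖ * ‖deriv u x‖ + ‖v x‖ * ‖deriv v x‖)
      + (S + S ^ 2) * (‖u x‖ ^ 2 + ‖v x‖ ^ 2) :=
    (hkin.add (hcross.const_mul _)).add (hmass.const_mul _)
  have hcont : Continuous fun x ↦ mtmDensity (u x) (v x) (deriv u x) (deriv v x) :=
    hu.continuous.mtmDensity hv.continuous (hu.continuous_deriv le_rfl)
      (hv.continuous_deriv le_rfl)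
  have hdensity : Integrable fun x ↦ mtmDensity (u x) (v x) (deriv u x) (deriv v x) :=
    hupper.mono' hcont.aestronglyMeasurable (ae_of_all _ fun x ↦ by
      rw [Real.norm_eq_abs]
      exact abs_mtmDensity_le (hS x))
  calc _ = ∫ x, ((‖deriv u x‖ ^ 2 + ‖deriv v x‖ ^ 2)
          - 2 * S * (‖u x‖ * ‖deriv u x‖ + ‖v x‖ * ‖deriv v x‖)
          - S * (‖u x‖ ^ 2 + ‖v x‖ ^ 2)) := by
        rw [integral_sub hkin_cross (hmass.const_mul _),
          integral_sub hkin (hcross.const_mul _), integral_const_mul, integral_const_mul]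
    _ ≤ ∫ x, mtmDensity (u x) (v x) (deriv u x) (deriv v x) :=
        integral_mono hlower hdensity fun x ↦ mtmDensity_lower_bound (hS x)
    _ = mtmR u v := (mtmR_eq_integral_mtmDensity u v).symm

theorem sq_norm_add_sq_norm_le_integral_norm_mul_norm_deriv (hu : ContDiff ℝ 1 u)
    (hv : ContDiff ℝ 1 v) (hu2 : MemLp u 2) (hv2 : MemLp v 2) (hu'2 : MemLp (deriv u) 2)
    (hv'2 : MemLp (deriv v) 2) (x : ℝ) :
    ‖u x‖ ^ 2 + ‖v x‖ ^ 2 ≤ ∫ t, (‖u t‖ * ‖deriv u t‖ + ‖v t‖ * ‖deriv v t‖) := by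
  rw [integral_add (hu2.integrable_norm_mul_norm hu'2) (hv2.integrable_norm_mul_norm hv'2)]
  exact add_le_add
    (sq_norm_le_integral_norm_mul_norm_deriv hu (hu2.integrable_norm_pow two_ne_zero)
      (hu2.integrable_norm_mul_norm hu'2) x)
    (sq_norm_le_integral_norm_mul_norm_deriv hv (hv2.integrable_norm_pow two_ne_zero)
      (hv2.integrable_norm_mul_norm hv'2) x)

theorem sq_integral_norm_mul_norm_deriv_le (hu2 : MemLp u 2) (hv2 : MemLp v 2)
    (hu'2 : MemLp (deriv u) 2) (hv'2 : MemLp (deriv v) 2) :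
    (∫ t, (‖u t‖ * ‖deriv u t‖ + ‖v t‖ * ‖deriv v t‖)) ^ 2
      ≤ (∫ t, (‖u t‖ ^ 2 + ‖v t‖ ^ 2)) * ∫ t, (‖deriv u t‖ ^ 2 + ‖deriv v t‖ ^ 2) := by
  rw [integral_add (hu2.integrable_norm_mul_norm hu'2) (hv2.integrable_norm_mul_norm hv'2),
    integral_add (hu2.integrable_norm_pow two_ne_zero) (hv2.integrable_norm_pow two_ne_zero),
    integral_add (hu'2.integrable_norm_pow two_ne_zero) (hv'2.integrable_norm_pow two_ne_zero)]
  have cs {w : ℝ → ℂ} (hw : MemLp w 2) (hw' : MemLp (deriv w) 2) :=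
    sq_integral_mul_le_integral_sq_mul_integral_sq (ae_of_all _ fun t ↦ norm_nonneg (w t))
      (ae_of_all _ fun t ↦ norm_nonneg (deriv w t)) hw.norm hw'.norm
  exact sq_add_le_mul_add (integral_nonneg fun _ ↦ by positivity)
    (integral_nonneg fun _ ↦ by positivity) (integral_nonneg fun _ ↦ by positivity)
    (integral_nonneg fun _ ↦ by positivity) (cs hu2 hu'2) (cs hv2 hv'2)

end

theorem stmt18 :
    ∃ Q₀ : ℝ, 0 < Q₀ ∧ ∃ C : ℝ, 0 < C ∧
      ∀ u v : ℝ → ℂ, ContDiff ℝ 1 u → ContDiff ℝ 1 v →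
        Integrable (fun x => (‖u x‖) ^ 2) →
        Integrable (fun x => (‖v x‖) ^ 2) →
        Integrable (fun x => (‖deriv u x‖) ^ 2) →
        Integrable (fun x => (‖deriv v x‖) ^ 2) →
        (∫ x : ℝ, ((‖u x‖) ^ 2 + (‖v x‖) ^ 2)) ≤ Q₀ →
        (∫ x : ℝ, ((‖deriv u x‖) ^ 2 + (‖deriv v x‖) ^ 2))
          ≤ 2 * mtmR u v + C := by
  refine ⟨1 / 5, by norm_num, 1, one_pos, fun u v hu hv hu2 hv2 hu'2 hv'2 hsmall ↦ ?_⟩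
  have memLp_two {w : ℝ → ℂ} (hw : Continuous w) (h : Integrable fun x ↦ ‖w x‖ ^ 2) :
      MemLp w 2 :=
    (memLp_two_iff_integrable_sq_norm hw.aestronglyMeasurable).2 h
  replace hu2 := memLp_two hu.continuous hu2
  replace hv2 := memLp_two hv.continuous hv2
  replace hu'2 := memLp_two (hu.continuous_deriv le_rfl) hu'2
  replace hv'2 := memLp_two (hv.continuous_deriv le_rfl) hv'2
  have hR := integral_sq_norm_deriv_sub_le_mtmR hu hv hu2 hv2 hu'2 hv'2
    (sq_norm_add_sq_norm_le_integral_norm_mul_norm_deriv hu hv hu2 hv2 hu'2 hv'2)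
  have hJ := sq_integral_norm_mul_norm_deriv_le hu2 hv2 hu'2 hv'2
  set M := ∫ x, (‖u x‖ ^ 2 + ‖v x‖ ^ 2)
  set D := ∫ x, (‖deriv u x‖ ^ 2 + ‖deriv v x‖ ^ 2)
  set J := ∫ x, (‖u x‖ * ‖deriv u x‖ + ‖v x‖ * ‖deriv v x‖)
  have hM : 0 ≤ M := integral_nonneg fun _ ↦ by positivity
  have hD : 0 ≤ D := integral_nonneg fun _ ↦ by positivity
  nlinarith [sq_nonneg (J - M), mul_nonneg (sub_nonneg.2 hsmall) hD,
    mul_nonneg (sub_nonneg.2 hsmall) hM]
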